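/- Let A be a real n×C matrix, let 𝟙_n ∈ ℝⁿ be the all-ones vector, let p = (1/n)Aᵀ𝟙_n ∈ ℝ^C have all entries strictly positive, let D_p = diag(p), and set G = A − 𝟙_n pᵀ. For any natural number K, a real n×C matrix Γ* with rank(Γ*) ≤ K maximizes the objective Γ ↦ ⟨Γ, G⟩ − (1/2)‖Γ D_p^{1/2}‖_F² over {Γ : rank(Γ) ≤ K} if and only if the matrix M* = Γ* D_p^{1/2} minimizes M ↦ ‖M − G D_p^{−1/2}‖_F over {M : rank(M) ≤ K}. (Thus maximizing the quadratic approximation of the multilogit-bilinear log-likelihood under the rank-K constraint is equivalent to the rank-K Frobenius approximation of the MCA pseudo-residual matrix (A − 𝟙_n pᵀ) D_p^{−1/2}.) -/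

import Mathlib

open Matrix

/-- Frobenius inner product ⟨G, H⟩ = Tr(Gᵀ H). -/
noncomputable def frob {n m : ℕ} (G H : Matrix (Fin n) (Fin m) ℝ) : ℝ :=
  Matrix.trace (Gᵀ * H)

lemma frob_eq_sum {n m : ℕ} (G H : Matrix (Fin n) (Fin m) ℝ) :
    frob G H = ∑ i, ∑ j, G i j * H i j := by
  simp [frob, Matrix.trace, Matrix.mul_apply, Matrix.diag]
  rw [Finset.sum_comm]

lemma frob_self_nonneg {n m : ℕ} (G : Matrix (Fin n) (Fin m) ℝ) :
    0 ≤ frob G G := by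
  rw [frob_eq_sum]
  apply Finset.sum_nonneg
  intro i _
  exact Finset.sum_nonneg fun j _ => mul_self_nonneg _

lemma frob_sub_expand {n m : ℕ} (X R : Matrix (Fin n) (Fin m) ℝ) :
    frob (X - R) (X - R) = frob X X - 2 * frob X R + frob R R := by
  simp only [frob_eq_sum, Matrix.sub_apply, Finset.mul_sum, ← Finset.sum_sub_distrib,
    ← Finset.sum_add_distrib]
  refine Finset.sum_congr rfl fun i _ => Finset.sum_congr rfl fun j _ => ?_
  ring

/-- Maximizing the quadratic approximation of the multilogit-bilinear log-likelihood
under the rank-K constraint is equivalent to the rank-K Frobenius approximation of the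
MCA pseudo-residual matrix (A − 𝟙 pᵀ) D_p^{−1/2}. -/
theorem mca_quad_max_iff_frobenius_min {n C : ℕ} (K : ℕ)
    (A : Matrix (Fin n) (Fin C) ℝ)
    (p : Fin C → ℝ)
    (hpdef : ∀ c, p c = (1 / (n : ℝ)) * ∑ i, A i c)
    (hppos : ∀ c, 0 < p c)
    (Γs : Matrix (Fin n) (Fin C) ℝ) (hΓs : Γs.rank ≤ K) :
    (∀ Γ : Matrix (Fin n) (Fin C) ℝ, Γ.rank ≤ K →
        frob Γ (A - Matrix.of fun _ c => p c)
            - (1 / 2) * frob (Γ * Matrix.diagonal fun c => Real.sqrt (p c))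
                (Γ * Matrix.diagonal fun c => Real.sqrt (p c))
          ≤ frob Γs (A - Matrix.of fun _ c => p c)
            - (1 / 2) * frob (Γs * Matrix.diagonal fun c => Real.sqrt (p c))
                (Γs * Matrix.diagonal fun c => Real.sqrt (p c))) ↔
    (∀ M : Matrix (Fin n) (Fin C) ℝ, M.rank ≤ K →
        Real.sqrt (frob
            (Γs * (Matrix.diagonal fun c => Real.sqrt (p c))
              - (A - Matrix.of fun _ c => p c) * Matrix.diagonal fun c => (Real.sqrt (p c))⁻¹)
            (Γs * (Matrix.diagonal fun c => Real.sqrt (p c))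
              - (A - Matrix.of fun _ c => p c) * Matrix.diagonal fun c => (Real.sqrt (p c))⁻¹))
          ≤ Real.sqrt (frob
            (M - (A - Matrix.of fun _ c => p c) * Matrix.diagonal fun c => (Real.sqrt (p c))⁻¹)
            (M - (A - Matrix.of fun _ c => p c) * Matrix.diagonal fun c => (Real.sqrt (p c))⁻¹))) := by
  set G : Matrix (Fin n) (Fin C) ℝ := A - Matrix.of fun _ c => p c with hG
  set D : Matrix (Fin C) (Fin C) ℝ := Matrix.diagonal fun c => Real.sqrt (p c) with hD
  set E : Matrix (Fin C) (Fin C) ℝ := Matrix.diagonal fun c => (Real.sqrt (p c))⁻¹ with hE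
  have hsq : ∀ c, Real.sqrt (p c) ≠ 0 := fun c =>
    ne_of_gt (Real.sqrt_pos.mpr (hppos c))
  have hED : E * D = 1 := by
    rw [hE, hD, Matrix.diagonal_mul_diagonal]
    convert Matrix.diagonal_one
    exact inv_mul_cancel₀ (hsq _)
  -- key identity: frob Γ G = frob (Γ*D) (G*E)
  have hkey : ∀ Γ : Matrix (Fin n) (Fin C) ℝ,
      frob Γ G = frob (Γ * D) (G * E) := by
    intro Γ
    simp only [frob_eq_sum, hD, hE, Matrix.mul_diagonal]
    refine Finset.sum_congr rfl fun i _ => Finset.sum_congr rfl fun j _ => ?_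
    field_simp
    rw [eq_div_iff (hsq j)]
  -- objective rewritten
  have hobj : ∀ Γ : Matrix (Fin n) (Fin C) ℝ,
      frob Γ G - (1 / 2) * frob (Γ * D) (Γ * D)
        = (1 / 2) * frob (G * E) (G * E)
          - (1 / 2) * frob (Γ * D - G * E) (Γ * D - G * E) := by
    intro Γ
    rw [frob_sub_expand, hkey Γ]
    ring
  constructor
  · intro h M hM
    have hΓ : (M * E).rank ≤ K := le_trans (Matrix.rank_mul_le_left M E) hM
    have h2 := h (M * E) hΓ
    rw [hobj, hobj, Matrix.mul_assoc, hED, Matrix.mul_one] at h2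
    have : frob (Γs * D - G * E) (Γs * D - G * E)
        ≤ frob (M - G * E) (M - G * E) := by linarith
    exact Real.sqrt_le_sqrt this
  · intro h Γ hΓ
    have hM : (Γ * D).rank ≤ K := le_trans (Matrix.rank_mul_le_left Γ D) hΓ
    have h2 := h (Γ * D) hM
    have h3 : frob (Γs * D - G * E) (Γs * D - G * E)
        ≤ frob (Γ * D - G * E) (Γ * D - G * E) := by
      nlinarith [Real.sq_sqrt (frob_self_nonneg (Γs * D - G * E)),
        Real.sq_sqrt (frob_self_nonneg (Γ * D - G * E)),
        Real.sqrt_nonneg (frob (Γ * D - G * E) (Γ * D - G * E)),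
        Real.sqrt_nonneg (frob (Γs * D - G * E) (Γs * D - G * E))]
    rw [hobj, hobj]
    linarith
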